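/- Let f₁ and f₂ be nonconstant maps in C(Σ, M) that are not in the same ℂ*-orbit, i.e. there is no nonzero a ∈ ℂ with f₂ = f₁ ∘ g_a. Then there exist ε₁ > 0 and ε₂ > 0 such that the saturated sets G·U_{ε₁}(f₁) = { h ∘ g_a : d(h, f₁) < ε₁, a ∈ ℂ, a ≠ 0 } and G·U_{ε₂}(f₂) = { h ∘ g_a : d(h, f₂) < ε₂, a ∈ ℂ, a ≠ 0 } are disjoint. (The ℂ*-space of nonconstant continuous maps is G-Hausdorff.) -/
import Mathlib


open OnePoint

/-- The reparametrization `g_a : Σ → Σ` of the Riemann sphere `Σ = OnePoint ℂ`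
extending `z ↦ a · z` on `ℂ` and fixing the point at infinity. -/
noncomputable def gA (a : ℂ) (ha : a ≠ 0) : C(OnePoint ℂ, OnePoint ℂ) where
  toFun := OnePoint.map (fun z => a * z)
  continuous_toFun := (Homeomorph.onePointCongr (Homeomorph.mulLeft₀ a ha)).continuous

open Filter Topology
lemma gA_coe (a : ℂ) (ha : a ≠ 0) (z : ℂ) : gA a ha (z : OnePoint ℂ) = ((a * z : ℂ) : OnePoint ℂ) := rfl

lemma gA_infty (a : ℂ) (ha : a ≠ 0) : gA a ha ∞ = ∞ := rfl

lemma dist_comp_le {M : Type*} [MetricSpace M] [CompactSpace M]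
    (F H : C(OnePoint ℂ, M)) (g : C(OnePoint ℂ, OnePoint ℂ)) :
    dist (F.comp g) (H.comp g) ≤ dist F H :=
  (ContinuousMap.dist_le dist_nonneg).2 fun x => ContinuousMap.dist_apply_le_dist (g x)

/-- Key separation lemma. -/
lemma key {M : Type*} [MetricSpace M] [CompactSpace M]
    (f₁ f₂ : C(OnePoint ℂ, M)) (hf₂ : ∃ x y, f₂ x ≠ f₂ y)
    (horb : ¬ ∃ (a : ℂ) (ha : a ≠ 0), f₂ = f₁.comp (gA a ha)) :
    ∃ δ > 0, ∀ (c : ℂ) (hc : c ≠ 0), δ ≤ dist (f₁.comp (gA c hc)) f₂ := by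
  by_contra hcon
  push_neg at hcon
  -- choose a sequence cₙ
  have hseq : ∀ n : ℕ, ∃ (c : ℂ), ∃ (hc : c ≠ 0),
      dist (f₁.comp (gA c hc)) f₂ < 1 / (n + 1) := by
    intro n
    obtain ⟨c, hc, hlt⟩ := hcon (1 / (n + 1)) (by positivity)
    exact ⟨c, hc, hlt⟩
  choose c hc hd using hseq
  -- pointwise convergence
  have hpt : ∀ x : OnePoint ℂ,
      Tendsto (fun n => f₁ (gA (c n) (hc n) x)) atTop (𝓝 (f₂ x)) := by
    intro x
    rw [tendsto_iff_dist_tendsto_zero]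
    apply squeeze_zero (fun n => dist_nonneg) (fun n => ?_)
      (tendsto_one_div_add_atTop_nhds_zero_nat)
    calc dist (f₁ (gA (c n) (hc n) x)) (f₂ x)
        = dist ((f₁.comp (gA (c n) (hc n))) x) (f₂ x) := rfl
      _ ≤ dist (f₁.comp (gA (c n) (hc n))) f₂ := ContinuousMap.dist_apply_le_dist x
      _ ≤ 1 / (n + 1) := le_of_lt (hd n)
  -- cluster point of the sequence (cₙ) in the sphere
  obtain ⟨x, hx⟩ := exists_clusterPt_of_compactSpace
    (Filter.map (fun n => ((c n : ℂ) : OnePoint ℂ)) atTop)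
  have hx' : MapClusterPt x atTop (fun n => ((c n : ℂ) : OnePoint ℂ)) := hx
  -- fact A
  have factA : ∀ (z : ℂ) (hz : z ≠ 0), f₂ (z : OnePoint ℂ) = f₁ (gA z hz x) := by
    intro z hz
    have hcont : Continuous (fun y : OnePoint ℂ => f₁ (gA z hz y)) :=
      f₁.continuous.comp (gA z hz).continuous
    have h1 : ClusterPt (f₁ (gA z hz x))
        (Filter.map (fun n => f₁ (gA z hz ((c n : ℂ) : OnePoint ℂ))) atTop) := by
      have := hx'.clusterPt.map hcont.continuousAt (Filter.tendsto_map (f := fun y : OnePoint ℂ => f₁ (gA z hz y)))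
      rwa [Filter.map_map] at this
    have h2 : Tendsto (fun n => f₁ (gA z hz ((c n : ℂ) : OnePoint ℂ))) atTop
        (𝓝 (f₂ (z : OnePoint ℂ))) := by
      have : (fun n => f₁ (gA z hz ((c n : ℂ) : OnePoint ℂ)))
          = fun n => f₁ (gA (c n) (hc n) (z : OnePoint ℂ)) := by
        funext n
        simp only [gA_coe, mul_comm]
      rw [this]
      exact hpt _
    exact (eq_of_nhds_neBot (h1.mono h2)).symm
  -- fact B : value at 0
  have factB : f₂ ((0 : ℂ) : OnePoint ℂ) = f₁ ((0 : ℂ) : OnePoint ℂ) := by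
    have h2 := hpt ((0 : ℂ) : OnePoint ℂ)
    have : (fun n => f₁ (gA (c n) (hc n) ((0 : ℂ) : OnePoint ℂ)))
        = fun _ => f₁ ((0 : ℂ) : OnePoint ℂ) := by
      funext n; simp [gA_coe]
    rw [this] at h2
    exact tendsto_nhds_unique h2 tendsto_const_nhds
  -- fact C : value at ∞
  have factC : f₂ ∞ = f₁ ∞ := by
    have h2 := hpt ∞
    have : (fun n => f₁ (gA (c n) (hc n) ∞)) = fun _ => f₁ ∞ := by
      funext n; rfl
    rw [this] at h2
    exact tendsto_nhds_unique h2 tendsto_const_nhds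
  -- f₂ is not constant: no value m with f₂ constant
  have hnotconst : ∀ m : M, f₂ ≠ ContinuousMap.const _ m := by
    intro m hm
    obtain ⟨u, v, huv⟩ := hf₂
    rw [hm] at huv
    exact huv rfl
  -- case analysis on the cluster point x
  induction x using OnePoint.rec with
  | infty =>
    -- f₂ is constantly f₁ ∞ on the dense set of nonzero finite points
    have hdense : Dense (((↑) : ℂ → OnePoint ℂ) '' {z : ℂ | z ≠ 0}) :=
      OnePoint.denseRange_coe.dense_image OnePoint.continuous_coe
        (dense_compl_singleton (0 : ℂ))
    have heq : f₂ = ContinuousMap.const _ (f₁ ∞) := by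
      apply ContinuousMap.ext_iff.mpr ∘ funext_iff.mp
      apply Continuous.ext_on hdense f₂.continuous continuous_const
      rintro y ⟨z, hz, rfl⟩
      rw [factA z hz, gA_infty]
      rfl
    exact hnotconst _ heq
  | coe w =>
    by_cases hw : w = 0
    · subst hw
      have heq : f₂ = ContinuousMap.const _ (f₁ ((0 : ℂ) : OnePoint ℂ)) := by
        apply ContinuousMap.ext_iff.mpr ∘ funext_iff.mp
        apply Continuous.ext_on (OnePoint.denseRange_coe (X := ℂ)) f₂.continuous continuous_const
        rintro y ⟨z, rfl⟩
        by_cases hz : z = 0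
        · subst hz; exact factB
        · rw [factA z hz, gA_coe]
          simp
      exact hnotconst _ heq
    · -- f₂ = f₁ ∘ g_w
      apply horb
      refine ⟨w, hw, ?_⟩
      ext y
      induction y using OnePoint.rec with
      | infty => rw [ContinuousMap.comp_apply, gA_infty]; exact factC
      | coe z =>
        by_cases hz : z = 0
        · subst hz
          rw [ContinuousMap.comp_apply, gA_coe]
          simpa using factB
        · rw [factA z hz, gA_coe, ContinuousMap.comp_apply, gA_coe, mul_comm]

lemma gA_eq {a b : ℂ} (ha : a ≠ 0) (hb : b ≠ 0) (h : a = b) : gA a ha = gA b hb := by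
  subst h; rfl

lemma gA_comp (a b : ℂ) (ha : a ≠ 0) (hb : b ≠ 0) :
    (gA a ha).comp (gA b hb) = gA (a * b) (mul_ne_zero ha hb) := by
  ext x
  induction x using OnePoint.rec with
  | infty => rfl
  | coe z => simp [gA_coe, ContinuousMap.comp_apply, mul_assoc]

lemma gA_one : gA 1 one_ne_zero = ContinuousMap.id _ := by
  ext x
  induction x using OnePoint.rec with
  | infty => rfl
  | coe z => simp [gA_coe]

/-- Two nonconstant continuous maps `Σ → M` not in the same `ℂ*`-orbit admit disjoint
saturated (`G`-invariant) neighbourhoods: the `ℂ*`-space of nonconstant maps is G-Hausdorff. -/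
theorem G_Hausdorff_nonconstant {M : Type*} [MetricSpace M] [CompactSpace M]
    (f₁ f₂ : C(OnePoint ℂ, M))
    (hf₁ : ∃ x y, f₁ x ≠ f₁ y) (hf₂ : ∃ x y, f₂ x ≠ f₂ y)
    (horb : ¬ ∃ (a : ℂ) (ha : a ≠ 0), f₂ = f₁.comp (gA a ha)) :
    ∃ ε₁ > 0, ∃ ε₂ > 0,
      Disjoint
        {k : C(OnePoint ℂ, M) | ∃ (h : C(OnePoint ℂ, M)) (a : ℂ) (ha : a ≠ 0),
          dist h f₁ < ε₁ ∧ k = h.comp (gA a ha)}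
        {k : C(OnePoint ℂ, M) | ∃ (h : C(OnePoint ℂ, M)) (a : ℂ) (ha : a ≠ 0),
          dist h f₂ < ε₂ ∧ k = h.comp (gA a ha)} := by
  obtain ⟨δ, hδ, hsep⟩ := key f₁ f₂ hf₂ horb
  refine ⟨δ / 2, by linarith, δ / 2, by linarith, ?_⟩
  rw [Set.disjoint_left]
  rintro k ⟨h₁, a, ha, hd₁, rfl⟩ ⟨h₂, b, hb, hd₂, hk₂⟩
  have hb' : (b⁻¹ : ℂ) ≠ 0 := inv_ne_zero hb
  have hc : a * b⁻¹ ≠ 0 := mul_ne_zero ha hb'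
  set gb := gA b hb
  set gb' := gA b⁻¹ hb'
  set gc := gA (a * b⁻¹) hc with hgc
  -- gc ∘ gb = g_a
  have e1 : gc.comp gb = gA a ha := by
    rw [hgc, gA_comp]
    exact gA_eq _ _ (by field_simp)
  -- gb ∘ gb' = id
  have e2 : gb.comp gb' = ContinuousMap.id _ := by
    rw [gA_comp]
    rw [gA_eq (mul_ne_zero hb hb') one_ne_zero (by field_simp), gA_one]
  -- the middle distance
  have hmid : dist (f₁.comp (gA a ha)) (f₂.comp gb) < δ := by
    calc dist (f₁.comp (gA a ha)) (f₂.comp gb)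
        ≤ dist (f₁.comp (gA a ha)) (h₁.comp (gA a ha))
          + dist (h₂.comp gb) (f₂.comp gb) := by
          rw [← hk₂]; exact dist_triangle _ _ _
      _ ≤ dist f₁ h₁ + dist h₂ f₂ := add_le_add (dist_comp_le _ _ _) (dist_comp_le _ _ _)
      _ < δ / 2 + δ / 2 := add_lt_add (by rw [dist_comm]; exact hd₁) hd₂
      _ = δ := by ring
  -- pull back by gb'
  have hfinal : dist (f₁.comp gc) f₂ < δ := by
    have e3 : (f₁.comp (gA a ha)).comp gb' = f₁.comp gc := by
      rw [← e1, ContinuousMap.comp_assoc, ContinuousMap.comp_assoc, e2, ContinuousMap.comp_id]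
    have e4 : (f₂.comp gb).comp gb' = f₂ := by
      rw [ContinuousMap.comp_assoc, e2, ContinuousMap.comp_id]
    calc dist (f₁.comp gc) f₂
        = dist ((f₁.comp (gA a ha)).comp gb') ((f₂.comp gb).comp gb') := by rw [e3, e4]
      _ ≤ dist (f₁.comp (gA a ha)) (f₂.comp gb) := dist_comp_le _ _ _
      _ < δ := hmid
  exact absurd (hsep _ hc) (not_le.mpr hfinal)
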